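/- Let V be a reduced cyclic word and x a single letter. If (P₁,Q₁), (P₂,Q₂) ∈ LP₂(V, c(x)) are linked pairs with γ(P₁,Q₁) = γ(P₂,Q₂), then (P₁,Q₁) = (P₂,Q₂). -/

import Mathlib

/-!
Combinatorial model of the Goldman–Turaev Lie bialgebra of curves on a surface
with boundary, following M. Chas, "Combinatorial Lie bialgebras of curves on
surfaces".

The alphabet `𝔸ₙ = {a₁,…,aₙ, ā₁,…,āₙ}` is modelled by `Letter n := Fin n × Bool`,
with the bar involution flipping the boolean.  Linear words are lists of letters;
a cyclic word is a list up to rotation (`List.IsRotated`).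
-/

open List

abbrev Letter (n : ℕ) := Fin n × Bool

namespace ChasCW

variable {n : ℕ}

/-- The bar involution `x ↦ x̄` on letters. -/
def bar (x : Letter n) : Letter n := (x.1, !x.2)

/-- The formal inverse `W̄` of a linear word `W`. -/
def wordInv (w : List (Letter n)) : List (Letter n) := (w.map bar).reverse

/-- A linear word is freely reduced if no letter is followed by its inverse. -/
def Reduced (w : List (Letter n)) : Prop := w.Chain' (fun a b => b ≠ bar a)

/-- A nonempty word all of whose cyclic rotations are freely reduced:
a representative of a reduced cyclic word. -/
def CyclicallyReduced (w : List (Letter n)) : Prop :=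
  w ≠ [] ∧ ∀ i, Reduced (w.rotate i)

/-- The type of cyclic words: lists of letters up to rotation. -/
abbrev CWord (n : ℕ) := Quotient (List.IsRotated.setoid (Letter n))

/-- The cyclic word `c(w)` determined by a linear word `w`. -/
def cw (w : List (Letter n)) : CWord n := Quotient.mk _ w

/-- A surface symbol: a reduced cyclic word containing every letter of the
alphabet exactly once. -/
def SurfaceSymbol (O : List (Letter n)) : Prop :=
  CyclicallyReduced O ∧ ∀ x : Letter n, O.count x = 1

/-- `w` embeds injectively and orientation-preservingly as a cyclic subsequence
of the cyclic word `O`. -/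
def CyclicEmbeds (w O : List (Letter n)) : Prop :=
  w.Nodup ∧ ∃ i ≤ w.length, ∃ j ≤ O.length, (w.rotate i).Sublist (O.rotate j)

open Classical in
/-- The orientation `o(w) ∈ {-1,0,1}` of a cyclic word relative to the surface
symbol `O`: `1` for an orientation-preserving embedding of rings, `-1` for an
orientation-reversing one, `0` otherwise. -/
noncomputable def orient (O w : List (Letter n)) : ℤ :=
  if CyclicEmbeds w O then 1 else if CyclicEmbeds w O.reverse then -1 else 0

/-- Case (1) of Definition 2.1: `P = p₁p₂`, `Q = q₁q₂` and
`o(c(p̄₁q̄₁p₂q₂)) ≠ 0`. -/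
def Linked1 (O : List (Letter n)) (p₁ p₂ q₁ q₂ : Letter n) : Prop :=
  Reduced [p₁, p₂] ∧ Reduced [q₁, q₂] ∧ orient O [bar p₁, bar q₁, p₂, q₂] ≠ 0

/-- Case (2) of Definition 2.1: `P = p₁Yp₂`, `Q = q₁Yq₂`, `p₁ ≠ q₁`, `p₂ ≠ q₂`,
`Y = x₁X x₂` nonempty, and `o(c(p̄₁q̄₁x₁)) = o(c(p₂q₂x̄₂))`. -/
def Linked2 (O : List (Letter n)) (p₁ p₂ q₁ q₂ x₁ x₂ : Letter n)
    (Y : List (Letter n)) : Prop :=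
  Y ≠ [] ∧ Y.head? = some x₁ ∧ Y.getLast? = some x₂ ∧
  p₁ ≠ q₁ ∧ p₂ ≠ q₂ ∧
  Reduced (p₁ :: (Y ++ [p₂])) ∧ Reduced (q₁ :: (Y ++ [q₂])) ∧
  orient O [bar p₁, bar q₁, x₁] = orient O [p₂, q₂, bar x₂]

/-- Case (3) of Definition 2.1: `P = p₁Yp₂`, `Q = q₁Ȳq₂`, `p₁ ≠ q̄₂`, `p₂ ≠ q̄₁`,
`Y = x₁X x₂` nonempty, and `o(c(q₂p̄₁x₁)) = o(c(q̄₁p₂x̄₂))`. -/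
def Linked3 (O : List (Letter n)) (p₁ p₂ q₁ q₂ x₁ x₂ : Letter n)
    (Y : List (Letter n)) : Prop :=
  Y ≠ [] ∧ Y.head? = some x₁ ∧ Y.getLast? = some x₂ ∧
  p₁ ≠ bar q₂ ∧ p₂ ≠ bar q₁ ∧
  Reduced (p₁ :: (Y ++ [p₂])) ∧ Reduced (q₁ :: (wordInv Y ++ [q₂])) ∧
  orient O [q₂, bar p₁, x₁] = orient O [bar q₁, p₂, bar x₂]

/-- `(P,Q)` is an `O`-linked pair (Definition 2.1). -/
def LinkedPair (O P Q : List (Letter n)) : Prop :=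
  (∃ p₁ p₂ q₁ q₂, P = [p₁, p₂] ∧ Q = [q₁, q₂] ∧ Linked1 O p₁ p₂ q₁ q₂) ∨
  (∃ p₁ p₂ q₁ q₂ x₁ x₂ Y, P = p₁ :: (Y ++ [p₂]) ∧ Q = q₁ :: (Y ++ [q₂]) ∧
    Linked2 O p₁ p₂ q₁ q₂ x₁ x₂ Y) ∨
  (∃ p₁ p₂ q₁ q₂ x₁ x₂ Y, P = p₁ :: (Y ++ [p₂]) ∧ Q = q₁ :: (wordInv Y ++ [q₂]) ∧
    Linked3 O p₁ p₂ q₁ q₂ x₁ x₂ Y)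

/-- The sign of a linked pair `(P,Q)`, computed from the (unique) decomposition
of `P` and `Q` prescribed by Definition 2.1. -/
noncomputable def signLP (O P Q : List (Letter n)) : ℤ :=
  match P, Q with
  | p₁ :: P', q₁ :: Q' =>
    match P'.getLast?, Q'.getLast? with
    | some p₂, some q₂ =>
      let Y := P'.dropLast
      let Z := Q'.dropLast
      if Y = [] then orient O [bar p₁, bar q₁, p₂, q₂]
      else
        match Y.head?, Y.getLast? with
        | some x₁, some _ =>
          if Z = wordInv Y then orient O [q₂, bar p₁, x₁]
          else orient O [bar p₁, bar q₁, x₁]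
        | _, _ => 0
    | _, _ => 0
  | _, _ => 0

/-- The subword of length `l` of (a large power of) the cyclic word `V`,
starting at position `i`.  This encodes occurrences of subwords of powers
of `V`. -/
def segment (V : List (Letter n)) (i l : ℕ) : List (Letter n) :=
  (((List.replicate (l + 1) V).flatten).rotate i).take l

/-- The set `LP₁(W)` of linked pairs of occurrences of subwords of `W`,
an occurrence being encoded by its starting position and its length. -/
def LP1 (O W : List (Letter n)) : Set ((ℕ × ℕ) × (ℕ × ℕ)) :=
  {e | e.1.1 < W.length ∧ e.2.1 < W.length ∧ e.1.2 ≤ W.length ∧ e.2.2 ≤ W.length ∧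
    LinkedPair O (segment W e.1.1 e.1.2) (segment W e.2.1 e.2.2)}

/-- The set `LP₂(V,W)` of linked pairs of the pair of cyclic words `(V,W)`:
pairs of occurrences of subwords of powers of `V` resp. `W` which are linked.
(The normalization `len V^{j-1} < len P ≤ len V^j` is implicit in the encoding
of an occurrence by a starting position `< len V` and a length.) -/
def LP2 (O V W : List (Letter n)) : Set ((ℕ × ℕ) × (ℕ × ℕ)) :=
  {e | e.1.1 < V.length ∧ e.2.1 < W.length ∧
    LinkedPair O (segment V e.1.1 e.1.2) (segment W e.2.1 e.2.2)}

end ChasCW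

namespace ChasCW

variable {n : ℕ}

/-- The glued cyclic word `γ(P,Q)` of a linked pair of occurrences
`e = ((i, len P), (j, len Q)) ∈ LP₂(V,W)` (Section 2.3).  In cases (1),(2) it is
`c(V₁W₁)` where `V₁`, `W₁` are the representatives of `V`, `W` cut immediately
before `p₂`, resp. `q₂`; in case (3) (detected by the middle of `Q` being the
inverse of the middle `Y` of `P`) it is `c(V₁W₁)` with `V₁` the subword of `V`
complementary to `Y` and `W₁` the subword of `W` complementary to `Ȳ`. -/
def gammaLP (V W : List (Letter n)) (e : (ℕ × ℕ) × (ℕ × ℕ)) : List (Letter n) :=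
  let i := e.1.1; let lp := e.1.2; let j := e.2.1; let lq := e.2.2
  let P := segment V i lp
  let Q := segment W j lq
  let Y := (P.drop 1).dropLast
  if 3 ≤ lp ∧ (Q.drop 1).dropLast = wordInv Y then
    segment V ((i + 1 + Y.length) % V.length)
      ((V.length - Y.length % V.length) % V.length) ++
    segment W ((j + 1 + Y.length) % W.length)
      ((W.length - Y.length % W.length) % W.length)
  else
    V.rotate ((i + lp - 1) % V.length) ++ W.rotate ((j + lq - 1) % W.length)

/-- The first cyclic word `δ₁(P,Q)` obtained by cutting `W` along the linked
pair of occurrences `e ∈ LP₁(W)`. -/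
def delta1 (W : List (Letter n)) (e : (ℕ × ℕ) × (ℕ × ℕ)) : List (Letter n) :=
  let m := W.length
  let i := e.1.1; let lp := e.1.2; let j := e.2.1; let lq := e.2.2
  let P := segment W i lp
  let Q := segment W j lq
  let Y := (P.drop 1).dropLast
  let c₁ := (i + lp - 1) % m
  let c₂ := (j + lq - 1) % m
  if 3 ≤ lp ∧ (Q.drop 1).dropLast = wordInv Y then
    (W.rotate c₁).take (((j + m - c₁) % m) + 1)
  else
    (W.rotate c₁).take ((c₂ + m - c₁) % m)

/-- The second cyclic word `δ₂(P,Q)` obtained by cutting `W` along the linked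
pair of occurrences `e ∈ LP₁(W)`. -/
def delta2 (W : List (Letter n)) (e : (ℕ × ℕ) × (ℕ × ℕ)) : List (Letter n) :=
  let m := W.length
  let i := e.1.1; let lp := e.1.2; let j := e.2.1; let lq := e.2.2
  let P := segment W i lp
  let Q := segment W j lq
  let Y := (P.drop 1).dropLast
  let c₁ := (i + lp - 1) % m
  let c₂ := (j + lq - 1) % m
  if 3 ≤ lp ∧ (Q.drop 1).dropLast = wordInv Y then
    (W.rotate c₂).take (((i + m - c₂) % m) + 1)
  else
    (W.rotate c₂).take ((c₁ + m - c₂) % m)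

open Classical in
/-- `LP₁(W)` as a finite set. -/
noncomputable def LP1F (O W : List (Letter n)) : Finset ((ℕ × ℕ) × (ℕ × ℕ)) :=
  ((Finset.range W.length ×ˢ Finset.range (W.length + 1)) ×ˢ
   (Finset.range W.length ×ˢ Finset.range (W.length + 1))).filter
    (fun e => LinkedPair O (segment W e.1.1 e.1.2) (segment W e.2.1 e.2.2))

open Classical in
/-- `LP₂(V,W)` as a finite set (subword lengths are `< len V + len W` by
Proposition 2.12). -/
noncomputable def LP2F (O V W : List (Letter n)) : Finset ((ℕ × ℕ) × (ℕ × ℕ)) :=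
  ((Finset.range V.length ×ˢ Finset.range (V.length + W.length)) ×ˢ
   (Finset.range W.length ×ˢ Finset.range (V.length + W.length))).filter
    (fun e => LinkedPair O (segment V e.1.1 e.1.2) (segment W e.2.1 e.2.2))

/-- The combinatorial Turaev cobracket
`δ(W) = ∑_{(P,Q) ∈ LP₁(W)} sign(P,Q) δ₁(P,Q) ⊗ δ₂(P,Q)`, with values in the
tensor square of the vector space with basis the cyclic words, realized as the
free vector space on pairs of cyclic words (`single (c₁, c₂) 1 = c₁ ⊗ c₂`). -/
noncomputable def cobracket (O W : List (Letter n)) :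
    (CWord n × CWord n) →₀ ℚ :=
  ∑ e ∈ LP1F O W,
    (signLP O (segment W e.1.1 e.1.2) (segment W e.2.1 e.2.2)) •
      Finsupp.single (cw (delta1 W e), cw (delta2 W e)) (1 : ℚ)

/-- The combinatorial Goldman bracket
`[V,W] = ∑_{(P,Q) ∈ LP₂(V,W)} sign(P,Q) γ(P,Q)`. -/
noncomputable def bracket (O V W : List (Letter n)) : CWord n →₀ ℚ :=
  ∑ e ∈ LP2F O V W,
    (signLP O (segment V e.1.1 e.1.2) (segment W e.2.1 e.2.2)) •
      Finsupp.single (cw (gammaLP V W e)) (1 : ℚ)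

end ChasCW

/-!
For a linked pair of `V` and `c(x)`, the glued word `γ` arises from `V` either by lengthening a
maximal run `u₁ xᵏ u₂` (`u₁, u₂ ≠ x`) to `u₁ xᵏ⁺¹ u₂`, or by shrinking a maximal run `u₁ x̄ᵏ u₂`
(`k ≥ 1`) to `u₁ u₂`; the length of `γ` tells the two cases apart. In either case the multiset of
maximal runs of `γ` is that of `V` with the triple `(u₁, k, u₂)` traded for `(u₁, k', u₂)`,
`k' ≠ k`. Two pairs with the same `γ` therefore take the same triple out of the multiset of `V`,
and the triple determines the pair.
-/

theorem Function.Periodic.sum_range_add_left {M : Type*} [AddCommMonoid M] {f : ℕ → M} {m : ℕ}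
    (hf : Function.Periodic f m) (s : ℕ) :
    ∑ p ∈ Finset.range m, f (s + p) = ∑ p ∈ Finset.range m, f p := by
  induction s with
  | zero => simp
  | succ s ih =>
    rw [← ih]
    rcases m with _ | m
    · simp
    · rw [Finset.sum_range_succ, Finset.sum_range_succ' (fun p => f (s + p)),
        show s + 1 + m = s + 0 + (m + 1) by omega, hf]
      simp only [add_assoc, add_comm 1]

theorem Multiset.eq_of_add_singleton_eq {β : Type*} {s t : Multiset β} {a a' b b' : β}
    (ha : s + {a'} = t + {a}) (hb : s + {b'} = t + {b}) (h : a ≠ a') : a = b := by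
  have hcancel : t + ({a} + {b'}) = t + ({b} + {a'}) := by
    rw [← add_assoc, ← add_assoc, ← ha, ← hb, add_right_comm]
  have hmem : a ∈ ({b} + {a'} : Multiset β) := by
    rw [← add_left_cancel hcancel]
    simp
  simpa [h] using hmem

theorem List.getElem_flatten_replicate {α : Type*} {V : List α} (hV : V ≠ []) {r q : ℕ}
    (hq : q < (replicate r V).flatten.length) :
    (replicate r V).flatten[q] = V[q % V.length]'(Nat.mod_lt _ (length_pos_iff.mpr hV)) := by
  induction r generalizing q with
  | zero => simp at hq
  | succ r ih =>
    simp only [replicate_succ, flatten_cons, getElem_append]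
    split_ifs with h
    · simp [Nat.mod_eq_of_lt h]
    · rw [ih]
      simp only [Nat.mod_eq_sub_mod (not_lt.mp h)]

theorem List.eq_of_replicate_eq_cons_append {α : Type*} {l : ℕ} {x a b : α} {Y : List α}
    (h : replicate l x = a :: (Y ++ [b])) :
    a = x ∧ b = x ∧ Y = replicate Y.length x ∧ l = Y.length + 2 := by
  have hmem : ∀ c ∈ a :: (Y ++ [b]), c = x := fun c hc => eq_of_mem_replicate (h ▸ hc)
  exact ⟨hmem a (by simp), hmem b (by simp),
    eq_replicate_iff.mpr ⟨rfl, fun c hc => hmem c (by simp [hc])⟩, by simpa using congrArg length h⟩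

theorem List.replicate_add_two {α : Type*} (k : ℕ) (x : α) :
    replicate (k + 2) x = x :: (replicate k x ++ [x]) := by
  rw [replicate_succ, replicate_succ']

namespace ChasCW

section Runs

variable {α : Type*} {y a b : α}

/-- `G` arises from the cyclic word `V` by replacing a maximal run `u₁ yᵏ u₂` by `u₁ y^k' u₂`. -/
def ReplacesRun (y : α) (V G : List α) (u₁ : α) (k k' : ℕ) (u₂ : α) : Prop :=
  u₁ ≠ y ∧ u₂ ≠ y ∧ ∃ W₀ : List α, (W₀ ++ [u₁]).head? = some u₂ ∧
    V ~r W₀ ++ u₁ :: replicate k y ∧ G ~r W₀ ++ u₁ :: replicate k' y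

namespace ReplacesRun

variable {V G : List α} {u₁ u₂ : α} {k k' : ℕ}

theorem length_add (h : ReplacesRun y V G u₁ k k' u₂) : G.length + k = V.length + k' := by
  obtain ⟨-, -, W₀, -, hV, hG⟩ := h
  simp only [hV.perm.length_eq, hG.perm.length_eq, length_append, length_cons, length_replicate]
  omega

end ReplacesRun

variable [DecidableEq α]

-- The fallback `headD a` covers a cyclic word whose only letter other than `y` is `a`.
def runAtHead (y : α) : List α → Multiset (α × ℕ × α)
  | [] => 0
  | a :: R => if a = y then 0 else
      {(a, (R.takeWhile (· = y)).length, (R.dropWhile (· = y)).headD a)}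

@[simp]
theorem runAtHead_cons_self (R : List α) : runAtHead y (y :: R) = 0 := by
  simp [runAtHead]

theorem runAtHead_append_cons {l : List α} (hl : l ≠ []) (hb : b ≠ y) (S : List α) :
    runAtHead y (l ++ b :: S) = runAtHead y (l ++ [b]) := by
  obtain ⟨a, R, rfl⟩ := List.exists_cons_of_ne_nil hl
  simp only [runAtHead, cons_append, takeWhile_append, dropWhile_append]
  split_ifs <;> simp [hb, head?_append]

theorem runAtHead_cons_replicate_append (ha : a ≠ y) (k : ℕ) {T : List α}
    (hT : ∀ c ∈ T.head?, c ≠ y) :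
    runAtHead y (a :: (replicate k y ++ T)) = {(a, k, T.headD a)} := by
  cases T with
  | nil => simp [runAtHead, ha]
  | cons c T => simp_all [runAtHead]

/-- The multiset of maximal subwords `a yᵏ b` (`a, b ≠ y`) of the cyclic word `U`, recorded as
triples `(a, k, b)`. -/
def runs (y : α) (U : List α) : Multiset (α × ℕ × α) :=
  ∑ p ∈ Finset.range U.length, runAtHead y (U.rotate p)

theorem runs_rotate (y : α) (U : List α) (s : ℕ) : runs y (U.rotate s) = runs y U := by
  have hper : Function.Periodic (fun p => runAtHead y (U.rotate p)) U.length := fun p => by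
    simp only [← rotate_rotate, ← length_rotate U p, rotate_length]
  simp only [runs, length_rotate, rotate_rotate]
  exact hper.sum_range_add_left s

theorem runs_eq_of_isRotated {U U' : List α} (h : U ~r U') : runs y U = runs y U' := by
  obtain ⟨s, rfl⟩ := h
  exact (runs_rotate y U s).symm

theorem runs_append_cons_replicate {W₀ : List α} {u₁ u₂ : α} (h₁ : u₁ ≠ y)
    (hhead : (W₀ ++ [u₁]).head? = some u₂) (h₂ : u₂ ≠ y) (k : ℕ) :
    runs y (W₀ ++ u₁ :: replicate k y) =
      (∑ p ∈ Finset.range W₀.length, runAtHead y (W₀.drop p ++ [u₁])) + {(u₁, k, u₂)} := by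
  -- A run starting inside `W₀` ends at `u₁` at the latest, the run starting at `u₁` is `yᵏ`, and
  -- the positions of the `y`s contribute nothing.
  rw [runs, length_append, length_cons, length_replicate, Finset.sum_range_add,
    Finset.sum_range_succ', add_zero, rotate_append_length_eq]
  congr 1
  · refine Finset.sum_congr rfl fun p hp => ?_
    have hp : p < W₀.length := Finset.mem_range.mp hp
    rw [rotate_eq_drop_append_take (by simp only [length_append, length_cons]; omega),
      drop_append_of_le_length hp.le, take_append_of_le_length hp.le, append_assoc, cons_append,
      runAtHead_append_cons (by simpa using hp) h₁]
  · have hzero : ∀ j ∈ Finset.range k,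
        runAtHead y ((W₀ ++ u₁ :: replicate k y).rotate (W₀.length + (j + 1))) = 0 := by
      intro j hj
      have hj : j < k := Finset.mem_range.mp hj
      obtain ⟨R, hR⟩ : ∃ R, (W₀ ++ u₁ :: replicate k y).rotate (W₀.length + (j + 1)) = y :: R := by
        rw [← head?_eq_some_iff,
          head?_rotate (by simp only [length_append, length_cons, length_replicate]; omega)]
        simp [hj]
      rw [hR, runAtHead_cons_self]
    rw [Finset.sum_eq_zero hzero, zero_add, cons_append,
      runAtHead_cons_replicate_append h₁ k] <;> cases W₀ <;> simp_all

namespace ReplacesRun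

variable {V G G₁ G₂ : List α} {u₁ u₂ v₁ v₂ : α} {k k' l l' : ℕ}

theorem runs_add (h : ReplacesRun y V G u₁ k k' u₂) :
    runs y V + {(u₁, k', u₂)} = runs y G + {(u₁, k, u₂)} := by
  obtain ⟨h₁, h₂, W₀, hhead, hV, hG⟩ := h
  rw [runs_eq_of_isRotated hV, runs_eq_of_isRotated hG, runs_append_cons_replicate h₁ hhead h₂,
    runs_append_cons_replicate h₁ hhead h₂, add_right_comm]

theorem eq_of_isRotated (h : ReplacesRun y V G₁ u₁ k k' u₂) (h' : ReplacesRun y V G₂ v₁ l l' v₂)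
    (hG : G₁ ~r G₂) (hk : k ≠ k') : (u₁, k, u₂) = (v₁, l, v₂) :=
  Multiset.eq_of_add_singleton_eq h.runs_add
    (h'.runs_add.trans (by rw [runs_eq_of_isRotated hG.symm])) (by simpa using hk)

end ReplacesRun

end Runs

section Segments

variable {n : ℕ} {V : List (Letter n)}

theorem length_segment (hV : V ≠ []) (i l : ℕ) : (segment V i l).length = l := by
  have := length_pos_iff.mpr hV
  simp only [segment, length_take, length_rotate, length_flatten, map_replicate, sum_replicate,
    smul_eq_mul]
  exact min_eq_left (by nlinarith)

theorem getElem_segment (hV : V ≠ []) {i l q : ℕ} (hq : q < (segment V i l).length) :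
    (segment V i l)[q] = V[(i + q) % V.length]'(Nat.mod_lt _ (length_pos_iff.mpr hV)) := by
  simp only [segment, getElem_take, getElem_rotate]
  rw [getElem_flatten_replicate hV]
  congr 1
  simp [length_flatten, Nat.mod_mod_of_dvd, add_comm q]

theorem segment_append (hV : V ≠ []) (i a b : ℕ) :
    segment V i a ++ segment V (i + a) b = segment V i (a + b) := by
  refine ext_getElem (by simp [length_segment hV]) fun q h₁ h₂ => ?_
  rw [getElem_append, getElem_segment hV]
  split_ifs with h
  · rw [getElem_segment hV]
  · rw [getElem_segment hV]
    congr 2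
    simp only [length_segment hV] at h ⊢
    omega

theorem segment_eq_of_mod_eq (hV : V ≠ []) {i j : ℕ}
    (h : i % V.length = j % V.length) (l : ℕ) : segment V i l = segment V j l := by
  refine ext_getElem (by simp [length_segment hV]) fun q h₁ h₂ => ?_
  rw [getElem_segment hV, getElem_segment hV]
  simp only [Nat.add_mod i, Nat.add_mod j, h]

theorem segment_add_length (hV : V ≠ []) (i l : ℕ) : segment V (i + V.length) l = segment V i l :=
  segment_eq_of_mod_eq hV (Nat.add_mod_right i _) l

theorem rotate_eq_segment (hV : V ≠ []) (i : ℕ) : V.rotate i = segment V i V.length := by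
  refine ext_getElem (by simp [length_segment hV]) fun q h₁ h₂ => ?_
  rw [getElem_rotate, getElem_segment hV, add_comm]

theorem segment_singleton (x : Letter n) (i l : ℕ) : segment [x] i l = replicate l x := by
  simp [segment, rotate_replicate, take_replicate]

theorem segment_eq_cons_append (hV : V ≠ []) {i k : ℕ} {R : List (Letter n)} {u₁ u₂ : Letter n}
    (hR : R.length = k) (hP : segment V i (k + 2) = u₁ :: (R ++ [u₂])) :
    segment V i 1 = [u₁] ∧ segment V (i + 1) k = R ∧ segment V (i + 1 + k) 1 = [u₂] := by
  have hsplit : segment V i 1 ++ segment V (i + 1) k ++ segment V (i + 1 + k) 1 =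
      [u₁] ++ R ++ [u₂] := by
    rw [segment_append hV, add_assoc, segment_append hV, show 1 + k + 1 = k + 2 by omega, hP]
    rfl
  obtain ⟨hfirst_mid, hlast⟩ := append_inj hsplit (by simp [length_segment hV, hR, add_comm])
  obtain ⟨hfirst, hmid⟩ := append_inj hfirst_mid (by simp [length_segment hV])
  exact ⟨hfirst, hmid, hlast⟩

theorem lt_length_of_segment_eq_replicate (hV : V ≠ []) {i k : ℕ} {y u : Letter n}
    (hfirst : segment V i 1 = [u]) (hmid : segment V (i + 1) k = replicate k y) (hu : u ≠ y) :
    k < V.length := by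
  have hm0 : 0 < V.length := length_pos_iff.mpr hV
  by_contra! hk
  have hwrap : segment V (i + 1) k = segment V (i + 1) (V.length - 1) ++
      (segment V i 1 ++ segment V (i + 1) (k - V.length)) := by
    rw [segment_append hV, ← segment_add_length hV i,
      show i + V.length = i + 1 + (V.length - 1) by omega, segment_append hV]
    congr 1
    omega
  have : u ∈ replicate k y := by simp [← hmid, hwrap, hfirst]
  exact hu (eq_of_mem_replicate this)

theorem exists_rotate_eq_of_segment_eq (hV : V ≠ []) {i k : ℕ} {y u₁ u₂ : Letter n}
    (hP : segment V i (k + 2) = u₁ :: (replicate k y ++ [u₂])) (hu₁ : u₁ ≠ y) :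
    k < V.length ∧ ∃ W₀, (W₀ ++ [u₁]).head? = some u₂ ∧
      V.rotate (i + 1 + k) = W₀ ++ u₁ :: replicate k y ∧
      segment V (i + 1 + k) (V.length - k) = W₀ ++ [u₁] := by
  obtain ⟨hfirst, hmid, hlast⟩ := segment_eq_cons_append hV (length_replicate ..) hP
  have hk := lt_length_of_segment_eq_replicate hV hfirst hmid hu₁
  have hend : i + 1 + k + (V.length - k - 1) = i + V.length := by omega
  have hW : segment V (i + 1 + k) (V.length - k - 1) ++ [u₁] =
      segment V (i + 1 + k) (V.length - k) := by
    rw [← hfirst, ← segment_add_length hV i, ← hend, segment_append hV]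
    congr 1
    omega
  refine ⟨hk, segment V (i + 1 + k) (V.length - k - 1), ?_, ?_, hW.symm⟩
  · rw [hW, show V.length - k = 1 + (V.length - k - 1) by omega, ← segment_append hV, hlast]
    rfl
  · have hrot : V.rotate (i + 1 + k) = segment V (i + 1 + k) ((V.length - k - 1) + (1 + k)) := by
      rw [rotate_eq_segment hV]
      congr 1
      omega
    rw [hrot, ← segment_append hV, hend, segment_add_length hV, ← segment_append hV, hfirst,
      hmid]
    rfl

end Segments

section LinkedPairs

variable {n : ℕ}

theorem bar_bar (a : Letter n) : bar (bar a) = a := by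
  simp [bar]

theorem bar_ne_self (a : Letter n) : bar a ≠ a := by
  simp [bar, Prod.ext_iff]

theorem wordInv_replicate (k : ℕ) (a : Letter n) :
    wordInv (replicate k a) = replicate k (bar a) := by
  simp [wordInv]

theorem eq_replicate_bar_of_wordInv_eq {Y : List (Letter n)} {k : ℕ} {x : Letter n}
    (h : wordInv Y = replicate k x) : Y = replicate k (bar x) := by
  rw [wordInv, reverse_eq_iff, reverse_replicate, eq_replicate_iff, length_map] at h
  refine eq_replicate_iff.mpr ⟨h.1, fun c hc => ?_⟩
  rw [← h.2 (bar c) (mem_map_of_mem hc), bar_bar]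

theorem nodup_of_orient_ne_zero {O w : List (Letter n)} (h : orient O w ≠ 0) : w.Nodup := by
  unfold orient at h
  split_ifs at h with h₁ h₂
  exacts [h₁.1, h₂.1, absurd rfl h]

theorem LinkedPair.exists_of_right_eq_replicate {O P : List (Letter n)} {l : ℕ} {x : Letter n}
    (h : LinkedPair O P (replicate l x)) :
    ∃ y k u₁ u₂, P = u₁ :: (replicate k y ++ [u₂]) ∧ l = k + 2 ∧ u₁ ≠ y ∧ u₂ ≠ y ∧
      (y = x ∨ y = bar x ∧ 0 < k) := by
  rcases h with ⟨p₁, p₂, q₁, q₂, rfl, hQ, -, -, hor⟩ |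
    ⟨p₁, p₂, q₁, q₂, -, -, Y, rfl, hQ, -, -, -, hpq₁, hpq₂, -⟩ |
    ⟨p₁, p₂, q₁, q₂, -, -, Y, rfl, hQ, hY, -, -, hpq₁, hpq₂, -⟩
  · obtain ⟨hq₁, hq₂, -, rfl⟩ := eq_of_replicate_eq_cons_append (Y := []) hQ
    subst q₁ q₂
    -- `o(c(p̄₁ x̄ p₂ x)) ≠ 0` forces these four letters to be distinct, so `p₁, p₂ ≠ x`.
    have hnd := nodup_of_orient_ne_zero hor
    refine ⟨x, 0, p₁, p₂, rfl, rfl, ?_, ?_, Or.inl rfl⟩ <;> rintro rfl <;> simp at hnd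
  · obtain ⟨hq₁, hq₂, hY, rfl⟩ := eq_of_replicate_eq_cons_append hQ
    subst q₁ q₂
    obtain ⟨k, rfl⟩ : ∃ k, Y = replicate k x := ⟨_, hY⟩
    exact ⟨x, k, p₁, p₂, rfl, by simp, hpq₁, hpq₂, Or.inl rfl⟩
  · obtain ⟨hq₁, hq₂, hY', rfl⟩ := eq_of_replicate_eq_cons_append hQ
    subst q₁ q₂
    obtain ⟨k, hk⟩ : ∃ k, wordInv Y = replicate k x := ⟨_, hY'⟩
    obtain rfl := eq_replicate_bar_of_wordInv_eq hk
    refine ⟨bar x, k, p₁, p₂, rfl, by simp [wordInv], hpq₁, hpq₂, Or.inr ⟨rfl, ?_⟩⟩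
    simpa [Nat.pos_iff_ne_zero] using hY

end LinkedPairs

section Gluing

variable {n : ℕ} {V : List (Letter n)} {x u₁ u₂ : Letter n} {k : ℕ} {e : (ℕ × ℕ) × (ℕ × ℕ)}

theorem gammaLP_singleton_of_segment_eq_replicate_self (hV : V ≠ [])
    (hP : segment V e.1.1 e.1.2 = u₁ :: (replicate k x ++ [u₂])) (hQ : e.2.2 = k + 2) :
    gammaLP V [x] e = V.rotate (e.1.1 + 1 + k) ++ [x] := by
  obtain ⟨⟨i, lp⟩, j, lq⟩ := e
  obtain rfl : lp = k + 2 := by simpa [length_segment hV] using congrArg length hP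
  dsimp only at hP hQ ⊢
  subst hQ
  simp only [gammaLP, hP, segment_singleton, replicate_add_two, drop_one, tail_cons,
    dropLast_concat, wordInv_replicate, length_replicate, length_singleton, Nat.mod_one,
    rotate_singleton]
  have hne : ¬(3 ≤ k + 2 ∧ replicate k x = replicate k (bar x)) := fun ⟨hk, hrep⟩ =>
    (replicate_inj.mp hrep).2.elim (by omega) (bar_ne_self x).symm
  rw [if_neg hne, show i + (k + 2) - 1 = i + 1 + k by omega, rotate_mod]

theorem gammaLP_singleton_of_segment_eq_replicate_bar (hV : V ≠ []) (hk : 0 < k)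
    (hkV : k < V.length)
    (hP : segment V e.1.1 e.1.2 = u₁ :: (replicate k (bar x) ++ [u₂])) (hQ : e.2.2 = k + 2) :
    gammaLP V [x] e = segment V (e.1.1 + 1 + k) (V.length - k) := by
  obtain ⟨⟨i, lp⟩, j, lq⟩ := e
  obtain rfl : lp = k + 2 := by simpa [length_segment hV] using congrArg length hP
  dsimp only at hP hQ ⊢
  subst hQ
  simp only [gammaLP, hP, segment_singleton, replicate_add_two, drop_one, tail_cons,
    dropLast_concat, wordInv_replicate, length_replicate, length_singleton, Nat.mod_one,
    rotate_singleton, bar_bar, and_true]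
  rw [if_pos (by omega), replicate_zero, append_nil, Nat.mod_eq_of_lt hkV,
    Nat.mod_eq_of_lt (show V.length - k < V.length by omega)]
  exact segment_eq_of_mod_eq hV (Nat.mod_mod _ _) _

end Gluing

theorem exists_replacesRun_of_mem_LP2 {n : ℕ} {O V : List (Letter n)} (hV : V ≠ []) {x : Letter n}
    {e : (ℕ × ℕ) × (ℕ × ℕ)} (he : e ∈ LP2 O V [x]) :
    ∃ y k k' u₁ u₂, segment V e.1.1 e.1.2 = u₁ :: (replicate k y ++ [u₂]) ∧
      segment [x] e.2.1 e.2.2 = replicate (k + 2) x ∧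
      (y = x ∧ k' = k + 1 ∨ y = bar x ∧ k' = 0 ∧ 0 < k) ∧
      ReplacesRun y V (gammaLP V [x] e) u₁ k k' u₂ := by
  obtain ⟨-, -, hLP⟩ := he
  rw [segment_singleton] at hLP
  obtain ⟨y, k, u₁, u₂, hP, hl, hu₁, hu₂, hy⟩ := hLP.exists_of_right_eq_replicate
  have hlp : e.1.2 = k + 2 := by simpa [length_segment hV] using congrArg length hP
  obtain ⟨hk, W₀, hhead, hrot, hseg⟩ := exists_rotate_eq_of_segment_eq hV (hlp ▸ hP) hu₁
  have hQ : segment [x] e.2.1 e.2.2 = replicate (k + 2) x := by rw [segment_singleton, hl]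
  rcases hy with rfl | ⟨rfl, hk₀⟩
  · refine ⟨y, k, k + 1, u₁, u₂, hP, hQ, Or.inl ⟨rfl, rfl⟩, hu₁, hu₂, W₀, hhead, ⟨_, hrot⟩, 0, ?_⟩
    rw [rotate_zero, gammaLP_singleton_of_segment_eq_replicate_self hV hP hl, hrot, replicate_succ']
    simp
  · refine ⟨bar x, k, 0, u₁, u₂, hP, hQ, Or.inr ⟨rfl, rfl, hk₀⟩, hu₁, hu₂, W₀, hhead, ⟨_, hrot⟩,
      0, ?_⟩
    rw [rotate_zero, gammaLP_singleton_of_segment_eq_replicate_bar hV hk₀ hk hP hl, hseg]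
    rfl

theorem gamma_injective_on_LP2_with_letter_general {n : ℕ} (O V : List (Letter n))
    (x : Letter n) (hV : CyclicallyReduced V)
    (e₁ e₂ : (ℕ × ℕ) × (ℕ × ℕ))
    (h₁ : e₁ ∈ LP2 O V [x]) (h₂ : e₂ ∈ LP2 O V [x])
    (hγ : gammaLP V [x] e₁ ~r gammaLP V [x] e₂) :
    segment V e₁.1.1 e₁.1.2 = segment V e₂.1.1 e₂.1.2 ∧
      segment [x] e₁.2.1 e₁.2.2 = segment [x] e₂.2.1 e₂.2.2 := by
  obtain ⟨y₁, k₁, k₁', u₁, u₂, hP₁, hQ₁, hy₁, hR₁⟩ := exists_replacesRun_of_mem_LP2 hV.1 h₁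
  obtain ⟨y₂, k₂, k₂', v₁, v₂, hP₂, hQ₂, hy₂, hR₂⟩ := exists_replacesRun_of_mem_LP2 hV.1 h₂
  have hlen₁ := hR₁.length_add
  have hlen₂ := hR₂.length_add
  have hlen := hγ.perm.length_eq
  obtain rfl : y₁ = y₂ := by
    rcases hy₁ with ⟨rfl, rfl⟩ | ⟨rfl, rfl, _⟩ <;> rcases hy₂ with ⟨rfl, rfl⟩ | ⟨rfl, rfl, _⟩ <;>
      first | rfl | omega
  have hk : k₁ ≠ k₁' := by rcases hy₁ with ⟨-, rfl⟩ | ⟨-, rfl, _⟩ <;> omega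
  cases hR₁.eq_of_isRotated hR₂ hγ hk
  exact ⟨hP₁.trans hP₂.symm, hQ₁.trans hQ₂.symm⟩

/-- Lemma 5.1: let `V` be a reduced cyclic word and `x` a
letter.  If two linked pairs in `LP₂(V, c(x))` have the same glued cyclic word
`γ`, then they are the same pair. -/
theorem gamma_injective_on_LP2_with_letter {n : ℕ} (O V : List (Letter n))
    (x : Letter n) (hO : SurfaceSymbol O) (hV : CyclicallyReduced V)
    (e₁ e₂ : (ℕ × ℕ) × (ℕ × ℕ))
    (h₁ : e₁ ∈ LP2 O V [x]) (h₂ : e₂ ∈ LP2 O V [x])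
    (hγ : gammaLP V [x] e₁ ~r gammaLP V [x] e₂) :
    segment V e₁.1.1 e₁.1.2 = segment V e₂.1.1 e₂.1.2 ∧
      segment [x] e₁.2.1 e₁.2.2 = segment [x] e₂.2.1 e₂.2.2 :=
  gamma_injective_on_LP2_with_letter_general O V x hV e₁ e₂ h₁ h₂ hγ

end ChasCW
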